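/- Let H₁, …, H_k ∈ 𝒢(n, i) with 1 ≤ i ≤ n−1 be subspaces such that every nonempty closed E ⊆ S^{n−1} satisfying R_{H_j}E = E for j = 1,…,k equals S^{n−1}. Then every convex body K with R_{H_j}K = K for j = 1,…,k is a ball centered at the origin. -/

import Mathlib

/-- Second part of Corollary 3.3: if every nonempty closed subset of the unit sphere
invariant under the reflections `R_{H_j}`, `j = 1,…,k`, is the whole sphere, then every
convex body invariant under all these reflections is a ball centered at the origin. -/
theorem convexBody_eq_ball_of_reflection_invariant (n k i : ℕ)
    (hi : 1 ≤ i) (hin : i ≤ n - 1)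
    (H : Fin k → Submodule ℝ (EuclideanSpace ℝ (Fin n)))
    (hdim : ∀ j, Module.finrank ℝ (H j) = i)
    (hsphere : ∀ E : Set (EuclideanSpace ℝ (Fin n)), E.Nonempty → IsClosed E →
      E ⊆ Metric.sphere 0 1 → (∀ j, (H j).reflection '' E = E) →
      E = Metric.sphere 0 1)
    (K : Set (EuclideanSpace ℝ (Fin n))) (hKc : IsCompact K) (hKconv : Convex ℝ K)
    (hKint : (interior K).Nonempty) (hKsym : ∀ j, (H j).reflection '' K = K) :
    ∃ r : ℝ, 0 < r ∧ K = Metric.closedBall 0 r := by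
  have hn : 2 ≤ n := by omega
  obtain ⟨x₀, hx₀⟩ := hKint
  have hx₀K : x₀ ∈ K := interior_subset hx₀
  -- maximal norm point
  obtain ⟨p, hpK, hpmax'⟩ := hKc.exists_isMaxOn ⟨x₀, hx₀K⟩ (continuous_norm.continuousOn)
  have hpmax : ∀ x ∈ K, ‖x‖ ≤ ‖p‖ := fun x hx => hpmax' hx
  set r : ℝ := ‖p‖ with hr
  -- r > 0 : K contains a nonzero point
  have hrpos : 0 < r := by
    obtain ⟨ε, hε, hball⟩ := Metric.isOpen_iff.1 isOpen_interior x₀ hx₀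
    by_cases h0 : x₀ = 0
    · set y : EuclideanSpace ℝ (Fin n) := (ε/2) • EuclideanSpace.single ⟨0, by omega⟩ 1
      have hy : ‖y‖ = ε/2 := by
        simp [y, norm_smul, EuclideanSpace.norm_single, abs_of_pos hε]
      have hyK : y ∈ K := by
        apply interior_subset; apply hball
        simp [Metric.mem_ball, dist_eq_norm, h0, hy]
        linarith
      have := hpmax y hyK
      have : (0:ℝ) < ‖y‖ := by rw [hy]; linarith
      linarith [hpmax y hyK]
    · have : (0:ℝ) < ‖x₀‖ := norm_pos_iff.2 h0
      linarith [hpmax x₀ hx₀K]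
  -- key reflection commutation: ρ j (s • x) ∈ K ↔ s • x ∈ K
  have hmem : ∀ j (x : EuclideanSpace ℝ (Fin n)), (H j).reflection x ∈ K ↔ x ∈ K := by
    intro j x
    constructor
    · intro hx
      have : (H j).reflection ((H j).reflection x) ∈ (H j).reflection '' K := ⟨_, hx, rfl⟩
      rwa [Submodule.reflection_reflection, hKsym j] at this
    · intro hx
      rw [← hKsym j]; exact ⟨x, hx, rfl⟩
  set E : Set (EuclideanSpace ℝ (Fin n)) :=
    {u | u ∈ Metric.sphere (0 : EuclideanSpace ℝ (Fin n)) 1 ∧ r • u ∈ K} with hE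
  have hEsub : E ⊆ Metric.sphere 0 1 := fun u hu => hu.1
  have hEne : E.Nonempty := by
    refine ⟨r⁻¹ • p, ?_, ?_⟩
    · rw [mem_sphere_zero_iff_norm, norm_smul, norm_inv, norm_norm]
      exact inv_mul_cancel₀ hrpos.ne'
    · rw [smul_smul, mul_inv_cancel₀ hrpos.ne', one_smul]; exact hpK
  have hEclosed : IsClosed E := by
    apply IsClosed.inter (Metric.isClosed_sphere)
    exact hKc.isClosed.preimage (continuous_const_smul r)
  have hEinv : ∀ j, (H j).reflection '' E = E := by
    intro j
    ext u
    constructor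
    · rintro ⟨v, ⟨hv1, hv2⟩, rfl⟩
      refine ⟨?_, ?_⟩
      · rw [mem_sphere_zero_iff_norm, LinearIsometryEquiv.norm_map]
        exact mem_sphere_zero_iff_norm.1 hv1
      · rw [← LinearIsometryEquiv.map_smul]
        exact (hmem j _).2 hv2
    · intro hu
      refine ⟨(H j).reflection u, ⟨?_, ?_⟩, Submodule.reflection_reflection _ _⟩
      · rw [mem_sphere_zero_iff_norm, LinearIsometryEquiv.norm_map]
        exact mem_sphere_zero_iff_norm.1 hu.1
      · rw [← LinearIsometryEquiv.map_smul]
        exact (hmem j _).1 (by rw [Submodule.reflection_reflection]; exact hu.2)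
  have hEeq := hsphere E hEne hEclosed hEsub hEinv
  -- sphere of radius r is in K
  have hsphK : ∀ u : EuclideanSpace ℝ (Fin n), ‖u‖ = 1 → r • u ∈ K := by
    intro u hu
    have : u ∈ E := by rw [hEeq]; simp [Metric.mem_sphere, dist_eq_norm, hu]
    exact this.2
  refine ⟨r, hrpos, ?_⟩
  apply Set.Subset.antisymm
  · intro x hx
    simp [Metric.mem_closedBall, dist_eq_norm]
    exact hpmax x hx
  · intro x hx
    simp only [Metric.mem_closedBall, dist_eq_norm, sub_zero] at hx
    by_cases h0 : x = 0
    · subst h0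
      have u : EuclideanSpace ℝ (Fin n) := EuclideanSpace.single ⟨0, by omega⟩ 1
      have hu : ‖(EuclideanSpace.single (⟨0, by omega⟩ : Fin n) (1:ℝ) : EuclideanSpace ℝ (Fin n))‖ = 1 := by
        simp [EuclideanSpace.norm_single]
      have h1 := hsphK _ hu
      have h2 := hsphK (-(EuclideanSpace.single (⟨0, by omega⟩ : Fin n) (1:ℝ))) (by rw [norm_neg]; exact hu)
      have := hKconv h1 h2 (by norm_num : (0:ℝ) ≤ 1/2) (by norm_num : (0:ℝ) ≤ 1/2) (by norm_num)
      simpa [smul_smul] using this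
    · set u := ‖x‖⁻¹ • x with hudef
      have hxn : (0:ℝ) < ‖x‖ := norm_pos_iff.2 h0
      have hu : ‖u‖ = 1 := by
        simp [hudef, norm_smul, abs_of_pos (inv_pos.2 hxn), inv_mul_cancel₀ hxn.ne']
      have h1 := hsphK u hu
      have h2 := hsphK (-u) (by rw [norm_neg]; exact hu)
      set t : ℝ := (r + ‖x‖) / (2 * r) with ht
      have ht0 : 0 ≤ t := by positivity
      have ht1 : 0 ≤ 1 - t := by
        rw [ht, sub_nonneg, div_le_one (by positivity)]; linarith
      have := hKconv h1 h2 ht0 ht1 (by ring)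
      have heq : t • (r • u) + (1 - t) • (r • (-u)) = x := by
        have hsc : (t * r - (1 - t) * r) * ‖x‖⁻¹ = 1 := by
          rw [ht]; field_simp; ring
        calc t • (r • u) + (1 - t) • (r • (-u))
            = ((t * r - (1 - t) * r) * ‖x‖⁻¹) • x := by rw [hudef]; module
          _ = x := by rw [hsc, one_smul]
      rwa [heq] at this
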